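/- For every integer p ≥ 1, the polynomials U_{2p}(y) and y·T_{2p+1}(y) are coprime in ℚ[y] (equivalently ℂ[y]). -/

import Mathlib

/-!
`U_{2n}(0) = ±1`, so `U_{2n}` is prime to `X`, and the Pell identity
`T_{n+1}² + (1 - X²) U_n² = 1` is a Bézout relation between `U_n` and `T_{n+1}`.
-/

open Polynomial Polynomial.Chebyshev

namespace Polynomial

theorem isCoprime_X_of_isUnit_eval_zero {R : Type*} [CommRing R] {p : R[X]}
    (h : IsUnit (p.eval 0)) : IsCoprime p X := by
  obtain ⟨q, hq⟩ := X_dvd_sub_C (p := p)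
  rw [sub_eq_iff_eq_add, coeff_zero_eq_eval_zero] at hq
  have hC : IsCoprime (C (p.eval 0)) X := by
    simpa using (isCoprime_mul_unit_left_left (isUnit_C.mpr h) 1 X).mpr isCoprime_one_left
  rw [hq, add_comm]
  exact hC.add_mul_left_left q

namespace Chebyshev

variable (R : Type*) [CommRing R]

theorem U_sq_add_U_sq (n : ℤ) :
    U R n ^ 2 + U R (n + 1) ^ 2 - 2 * X * U R n * U R (n + 1) = 1 := by
  have h := congrArg (·.comp (2 * X : R[X])) (S_sq_add_S_sq R n)
  simp only [sub_comp, add_comp, mul_comp, pow_comp, X_comp, one_comp, S_comp_two_mul_X] at h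
  linear_combination h

theorem T_sq_add_one_sub_X_sq_mul_U_sq (n : ℤ) :
    T R (n + 1) ^ 2 + (1 - X ^ 2) * U R n ^ 2 = 1 := by
  have hT := T_eq_U_sub_X_mul_U R (n + 1)
  rw [add_sub_cancel_right] at hT
  linear_combination U_sq_add_U_sq R n + (T R (n + 1) + U R (n + 1) - X * U R n) * hT

theorem isCoprime_U_T_add_one (n : ℤ) : IsCoprime (U R n) (T R (n + 1)) :=
  ⟨(1 - X ^ 2) * U R n, T R (n + 1), by
    linear_combination T_sq_add_one_sub_X_sq_mul_U_sq R n⟩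

theorem isCoprime_U_two_mul_X (n : ℤ) : IsCoprime (U R (2 * n)) X :=
  isCoprime_X_of_isUnit_eval_zero <| by
    rw [U_eval_two_mul_zero]
    exact (Units.isUnit _).map (Int.castRingHom R)

end Chebyshev

end Polynomial

theorem chebyshev_U_coprime_X_mul_T_general (p : ℤ) :
    IsCoprime (U ℚ (2 * p)) ((X : ℚ[X]) * T ℚ (2 * p + 1)) :=
  (isCoprime_U_two_mul_X ℚ p).mul_right (isCoprime_U_T_add_one ℚ (2 * p))

/-- For every integer `p ≥ 1`, `U_{2p}(y)` and `y·T_{2p+1}(y)` are coprime in `ℚ[y]`. -/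
theorem chebyshev_U_coprime_X_mul_T (p : ℤ) (hp : 1 ≤ p) :
    IsCoprime (U ℚ (2 * p)) ((X : ℚ[X]) * T ℚ (2 * p + 1)) :=
  chebyshev_U_coprime_X_mul_T_general p
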